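/- arXiv:2301.10311 — 9 statements merged into one kernel-verified Lean document; each statement's English description precedes it below -/
import Mathlib

section
/- Let x, y, z be binary relations on a type A. If x is univalent, y is a vector, and z is injective, then the array write x[y↦z] = (y ⊓ zᵀ) ⊔ (yᶜ ⊓ x) is univalent. -/
variable {A : Type*}

/-- Relational composition. -/
def rcomp (r s : A → A → Prop) : A → A → Prop := fun a c => ∃ b, r a b ∧ s b c

/-- Relational converse (transposition). -/
def rconv (r : A → A → Prop) : A → A → Prop := fun a b => r b a

/-- The identity relation. -/
def rid : A → A → Prop := fun a b => a = b

/-- Reflexive-transitive closure. -/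
def rstar (r : A → A → Prop) : A → A → Prop := Relation.ReflTransGen r

/-- Transitive closure. -/
def rplus (r : A → A → Prop) : A → A → Prop := Relation.TransGen r

def RUnivalent (r : A → A → Prop) : Prop := rcomp (rconv r) r ≤ rid

def RInjective (r : A → A → Prop) : Prop := rcomp r (rconv r) ≤ rid

def RTotal (r : A → A → Prop) : Prop := rid ≤ rcomp r (rconv r)

def RSurjective (r : A → A → Prop) : Prop := rid ≤ rcomp (rconv r) r

def RMapping (r : A → A → Prop) : Prop := RUnivalent r ∧ RTotal r

def RVector (r : A → A → Prop) : Prop := rcomp r ⊤ = r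

def RPoint (r : A → A → Prop) : Prop := RVector r ∧ RInjective r ∧ RSurjective r

def RAcyclic (r : A → A → Prop) : Prop := rplus r ≤ ridᶜ

def RForest (p : A → A → Prop) : Prop := RMapping p ∧ RAcyclic (p ⊓ ridᶜ)

def RArc (r : A → A → Prop) : Prop := RPoint (rcomp r ⊤) ∧ RPoint (rcomp (rconv r) ⊤)

/-- Array write x[y↦z] = (y ⊓ zᵀ) ⊔ (yᶜ ⊓ x). -/
def rwrite (x y z : A → A → Prop) : A → A → Prop := (y ⊓ rconv z) ⊔ (yᶜ ⊓ x)

/-- Array read x[y] = xᵀ∘y. -/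
def rread (x y : A → A → Prop) : A → A → Prop := rcomp (rconv x) y

/-- Weakly-connected components: wcc(x) = (x ⊔ xᵀ)^*. -/
def wcc (x : A → A → Prop) : A → A → Prop := rstar (x ⊔ rconv x)

/-- Forest components: fc(x) = x^* ∘ (xᵀ)^*. -/
def fc (x : A → A → Prop) : A → A → Prop := rcomp (rstar x) (rstar (rconv x))

/-- The vector of roots of the forest p: roots(p) = (p ⊓ 1)∘⊤. -/
def rroots (p : A → A → Prop) : A → A → Prop := rcomp (p ⊓ rid) ⊤

/-- The root of x in p: root(p,x) = ((pᵀ)^*∘x) ⊓ roots(p). -/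
def rroot (p x : A → A → Prop) : A → A → Prop := rcomp (rstar (rconv p)) x ⊓ rroots p

theorem RInjective.rconv_univalent {z : A → A → Prop} (hz : RInjective z) :
    RUnivalent (rconv z) :=
  hz

theorem RUnivalent.mono {r s : A → A → Prop} (hr : RUnivalent r) (hsr : s ≤ r) :
    RUnivalent s :=
  fun a b ⟨c, hca, hcb⟩ => hr a b ⟨c, hsr c a hca, hsr c b hcb⟩

theorem RUnivalent.sup {r s : A → A → Prop} (hr : RUnivalent r) (hs : RUnivalent s)
    (hdisj : ∀ c a b, r c a → ¬ s c b) : RUnivalent (r ⊔ s) := by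
  rintro a b ⟨c, hca | hca, hcb | hcb⟩
  · exact hr a b ⟨c, hca, hcb⟩
  · exact absurd hcb (hdisj c a b hca)
  · exact absurd hca (hdisj c b a hcb)
  · exact hs a b ⟨c, hca, hcb⟩

theorem RVector.apply_of_apply {y : A → A → Prop} (hy : RVector y) {c a : A} (h : y c a)
    (b : A) : y c b := by
  rw [← hy]
  exact ⟨a, h, trivial⟩

theorem write_univalent {A : Type*} (x y z : A → A → Prop)
    (hx : RUnivalent x) (hy : RVector y) (hz : RInjective z) :
    RUnivalent (rwrite x y z) :=
  RUnivalent.sup (hz.rconv_univalent.mono inf_le_right) (hx.mono inf_le_right)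
    fun _ _ b hca hcb => hcb.1 (hy.apply_of_apply hca.1 b)
end

section
/- Let x and y be binary relations on a type A. If x is a mapping and y is a point, then the array read x[y] = xᵀ∘y is a point. -/
variable {A : Type*}

/-
x[y] = xᵀ∘y composes the converse of a mapping, which is injective and surjective, with a point.
Composition preserves injectivity and surjectivity, and r∘v is a vector whenever v is.
-/

theorem rcomp_assoc (r s t : A → A → Prop) :
    rcomp (rcomp r s) t = rcomp r (rcomp s t) := by
  funext a d
  simp only [rcomp]
  exact propext ⟨fun ⟨c, ⟨b, hab, hbc⟩, hcd⟩ => ⟨b, hab, c, hbc, hcd⟩,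
    fun ⟨b, hab, c, hbc, hcd⟩ => ⟨c, ⟨b, hab, hbc⟩, hcd⟩⟩

theorem rconv_rcomp (r s : A → A → Prop) : rconv (rcomp r s) = rcomp (rconv s) (rconv r) := by
  funext a c
  simp only [rconv, rcomp]
  exact propext ⟨fun ⟨b, hcb, hba⟩ => ⟨b, hba, hcb⟩, fun ⟨b, hba, hcb⟩ => ⟨b, hcb, hba⟩⟩

theorem rid_rcomp (r : A → A → Prop) : rcomp rid r = r := by
  funext a c
  simp [rcomp, rid]

theorem rcomp_mono {r r' s s' : A → A → Prop} (hr : r ≤ r') (hs : s ≤ s') :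
    rcomp r s ≤ rcomp r' s' :=
  fun _ _ ⟨b, hab, hbc⟩ => ⟨b, hr _ _ hab, hs _ _ hbc⟩

theorem RUnivalent.injective_rconv {r : A → A → Prop} (hr : RUnivalent r) :
    RInjective (rconv r) :=
  hr

theorem RTotal.surjective_rconv {r : A → A → Prop} (hr : RTotal r) : RSurjective (rconv r) := hr

theorem RInjective.comp {r s : A → A → Prop} (hr : RInjective r) (hs : RInjective s) :
    RInjective (rcomp r s) :=
  calc rcomp (rcomp r s) (rconv (rcomp r s))
      = rcomp r (rcomp (rcomp s (rconv s)) (rconv r)) := by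
        rw [rconv_rcomp, rcomp_assoc, ← rcomp_assoc s]
    _ ≤ rcomp r (rcomp rid (rconv r)) := rcomp_mono le_rfl (rcomp_mono hs le_rfl)
    _ = rcomp r (rconv r) := by rw [rid_rcomp]
    _ ≤ rid := hr

theorem RSurjective.comp {r s : A → A → Prop} (hr : RSurjective r) (hs : RSurjective s) :
    RSurjective (rcomp r s) :=
  calc rid
      ≤ rcomp (rconv s) s := hs
    _ = rcomp (rconv s) (rcomp rid s) := by rw [rid_rcomp]
    _ ≤ rcomp (rconv s) (rcomp (rcomp (rconv r) r) s) := rcomp_mono le_rfl (rcomp_mono hr le_rfl)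
    _ = rcomp (rconv (rcomp r s)) (rcomp r s) := by
        simp only [rconv_rcomp, rcomp_assoc]

theorem RVector.comp_left {v : A → A → Prop} (hv : RVector v) (r : A → A → Prop) :
    RVector (rcomp r v) := by
  rw [RVector, rcomp_assoc, hv]

theorem RPoint.comp_left {p r : A → A → Prop} (hp : RPoint p) (hri : RInjective r)
    (hrs : RSurjective r) : RPoint (rcomp r p) :=
  ⟨hp.1.comp_left r, hri.comp hp.2.1, hrs.comp hp.2.2⟩

theorem read_point {A : Type*} (x y : A → A → Prop)
    (hx : RMapping x) (hy : RPoint y) :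
    RPoint (rread x y) :=
  hy.comp_left hx.1.injective_rconv hx.2.surjective_rconv
end

section
/- Let x, y, z be binary relations on a type A with y and z points. Then the array read x[y] = xᵀ∘y equals z if and only if y ⊓ x = y∘zᵀ. -/
variable {A : Type*}

/-! A point `y` is a vector whose only nonempty row is some row `p`. Hence `x[y] c d ↔ x p c`
for all `d`, and `y ⊓ x`, `y ∘ zᵀ` vanish outside row `p`, where their entries at `b` are `x p b`
and the value of the vector `z` on row `b`. Both sides thus say that `z` is `xᵀ` of row `p`. -/

theorem RVector.rel_of_rel {r : A → A → Prop} (hr : RVector r) {a b : A} (h : r a b) (c : A) :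
    r a c := by
  rw [← hr]
  exact ⟨b, h, trivial⟩

theorem rcomp_apply_of_vector_of_injective {r y : A → A → Prop} (hv : RVector y)
    (hi : RInjective y) {a b : A} (hab : y a b) (c d : A) : rcomp r y c d ↔ r c a := by
  constructor
  · rintro ⟨m, hcm, hmd⟩
    obtain rfl : m = a := hi m a ⟨b, hv.rel_of_rel hmd b, hab⟩
    exact hcm
  · intro hca
    exact ⟨a, hca, hv.rel_of_rel hab d⟩

theorem rcomp_rconv_apply_of_vector {y z : A → A → Prop} (hy : RVector y) (hz : RVector z)
    (a b c : A) : rcomp y (rconv z) a b ↔ y a c ∧ z b c :=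
  ⟨fun ⟨_, hy', hz'⟩ => ⟨hy.rel_of_rel hy' c, hz.rel_of_rel hz' c⟩, fun h => ⟨c, h⟩⟩

theorem read_iff {A : Type*} (x y z : A → A → Prop)
    (hy : RPoint y) (hz : RPoint z) :
    rread x y = z ↔ y ⊓ x = rcomp y (rconv z) := by
  obtain ⟨hyv, hyi, hys⟩ := hy
  have read_apply {a b : A} (hab : y a b) (c d : A) : rread x y c d ↔ x a c :=
    rcomp_apply_of_vector_of_injective hyv hyi hab c d
  constructor
  · rintro rfl
    ext a b
    rw [rcomp_rconv_apply_of_vector hyv hz.1 a b b]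
    exact and_congr_right fun hab => (read_apply hab b b).symm
  · intro h
    ext a b
    obtain ⟨p, -, hpb⟩ := hys b b rfl
    have hpa : y p a := hyv.rel_of_rel hpb a
    have hxz := congrFun₂ h p a
    rw [rcomp_rconv_apply_of_vector hyv hz.1 p a b] at hxz
    simpa only [Pi.inf_apply, inf_Prop_eq, hpa, hpb, true_and, eq_iff_iff, read_apply hpb] using hxz
end

section
/- Let x, y, z be binary relations on a type A. If y is a surjective vector and z is a vector, then reading the written array at the written index returns the written value: ((y ⊓ zᵀ) ⊔ (yᶜ ⊓ x))ᵀ∘y = z (the put-get lens law). -/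
variable {A : Type*}

theorem RVector.rel_iff {r : A → A → Prop} (hr : RVector r) {a b c : A} : r a b ↔ r a c := by
  constructor <;> intro h <;> rw [← hr] <;> exact ⟨_, h, trivial⟩

theorem RSurjective.exists_rel {r : A → A → Prop} (hr : RSurjective r) (a : A) : ∃ b, r b a := by
  obtain ⟨b, hba, -⟩ := hr a a rfl
  exact ⟨b, hba⟩

theorem RVector.rcomp_of_surjective {r s : A → A → Prop} (hr : RVector r) (hs : RSurjective s) :
    rcomp r s = r := by
  funext a c
  apply propext
  constructor
  · rintro ⟨b, hab, -⟩
    exact hr.rel_iff.mp hab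
  · intro hac
    obtain ⟨b, hbc⟩ := hs.exists_rel c
    exact ⟨b, hr.rel_iff.mp hac, hbc⟩

/-- Only the rows selected by `y` meet `y` in the read, and there the write has put `zᵀ`. -/
theorem rread_rwrite_of_vector (x : A → A → Prop) {y : A → A → Prop} (z : A → A → Prop)
    (hy : RVector y) : rread (rwrite x y z) y = rcomp z y := by
  funext a c
  apply propext
  constructor
  · rintro ⟨b, ⟨-, hzb⟩ | ⟨hnyb, -⟩, hbc⟩
    · exact ⟨b, hzb, hbc⟩
    · exact absurd (hy.rel_iff.mp hbc) hnyb
  · rintro ⟨b, hab, hbc⟩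
    exact ⟨b, Or.inl ⟨hy.rel_iff.mp hbc, hab⟩, hbc⟩

theorem put_get {A : Type*} (x y z : A → A → Prop)
    (hy1 : RSurjective y) (hy2 : RVector y) (hz : RVector z) :
    rread (rwrite x y z) y = z := by
  rw [rread_rwrite_of_vector x z hy2, hz.rcomp_of_surjective hy1]
end

section
/- Let x be a univalent binary relation on a type A. Then the forest-components relation fc(x) = x^*∘(xᵀ)^* is an equivalence: it is reflexive (1 ⊆ fc(x)), transitive (fc(x)∘fc(x) ⊆ fc(x)), and symmetric (fc(x)ᵀ = fc(x)). -/
variable {A : Type*}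

/- `fc x a b` says that `a` and `b` have a common `x^*`-descendant. Since a univalent `x` is a partial
function, the descendants of a point form a chain; so if `a, b` share `d` and `b, c` share `e`, then
`d` and `e` are comparable and the lower of the two is shared by `a` and `c`. -/

section

open Relation

variable {x : A → A → Prop} {a b c : A}

theorem RUnivalent.rightUnique (hx : RUnivalent x) : Relator.RightUnique x :=
  fun _ _ _ hab hac => hx _ _ ⟨_, hab, hac⟩

theorem rstar_rconv_iff : rstar (rconv x) a b ↔ rstar x b a :=
  reflTransGen_swap

theorem fc_iff_exists_common : fc x a b ↔ ∃ c, rstar x a c ∧ rstar x b c := by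
  simp only [fc, rcomp, rstar_rconv_iff]

theorem fc_refl (a : A) : fc x a a :=
  fc_iff_exists_common.2 ⟨a, .refl, .refl⟩

theorem fc_symm (h : fc x a b) : fc x b a :=
  let ⟨c, hac, hbc⟩ := fc_iff_exists_common.1 h
  fc_iff_exists_common.2 ⟨c, hbc, hac⟩

theorem RUnivalent.fc_trans (hx : RUnivalent x) (hab : fc x a b) (hbc : fc x b c) : fc x a c := by
  obtain ⟨d, had, hbd⟩ := fc_iff_exists_common.1 hab
  obtain ⟨e, hbe, hce⟩ := fc_iff_exists_common.1 hbc
  rcases ReflTransGen.total_of_right_unique hx.rightUnique hbd hbe with hde | hed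
  · exact fc_iff_exists_common.2 ⟨e, had.trans hde, hce⟩
  · exact fc_iff_exists_common.2 ⟨d, had, hce.trans hed⟩

end

theorem fc_equivalence {A : Type*} (x : A → A → Prop) (hx : RUnivalent x) :
    rid ≤ fc x ∧ rcomp (fc x) (fc x) ≤ fc x ∧ rconv (fc x) = fc x := by
  refine ⟨?_, ?_, ?_⟩
  · rintro a _ rfl
    exact fc_refl a
  · rintro a c ⟨b, hab, hbc⟩
    exact hx.fc_trans hab hbc
  · ext a b
    exact ⟨fc_symm, fc_symm⟩
end

section
/- Let p be a univalent binary relation on a type A. Then following parents from a root gives the root again: roots(p) = pᵀ∘roots(p) = (pᵀ)^*∘roots(p), and for every relation x, root(p,x) = pᵀ∘root(p,x) = (pᵀ)^*∘root(p,x). -/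
variable {A : Type*}

theorem rroots_apply {p : A → A → Prop} {a b : A} : rroots p a b ↔ p a a :=
  ⟨fun ⟨_, ⟨hpac, hac⟩, _⟩ => hac ▸ hpac, fun h => ⟨a, ⟨h, rfl⟩, trivial⟩⟩

theorem RUnivalent.eq {p : A → A → Prop} (hp : RUnivalent p) {a b c : A}
    (hba : p b a) (hbc : p b c) : a = c :=
  hp a c ⟨b, hba, hbc⟩

theorem rcomp_rstar_eq_of_rcomp_le {r s : A → A → Prop} (h : rcomp r s ≤ s) :
    rcomp (rstar r) s = s := by
  funext a b
  refine propext ⟨?_, fun hab => ⟨a, .refl, hab⟩⟩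
  rintro ⟨c, hac, hcb⟩
  induction hac using Relation.ReflTransGen.head_induction_on with
  | refl => exact hcb
  | head had _ ih => exact h _ b ⟨_, had, ih⟩

/-- The only parent of a root is the root itself, so `pᵀ∘–` fixes every relation whose
domain consists of roots. -/
theorem RUnivalent.rcomp_rconv_eq_of_le_rroots {p s : A → A → Prop} (hp : RUnivalent p)
    (hs : s ≤ rroots p) : rcomp (rconv p) s = s := by
  funext a b
  refine propext ⟨?_, fun hab => ⟨a, (rroots_apply (p := p)).1 (hs a b hab), hab⟩⟩
  rintro ⟨c, hca, hcb⟩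
  obtain rfl : a = c := hp.eq hca (rroots_apply.1 (hs c b hcb))
  exact hcb

theorem root_successor_loop {A : Type*} (p : A → A → Prop) (hp : RUnivalent p) :
    rroots p = rcomp (rconv p) (rroots p) ∧
    rroots p = rcomp (rstar (rconv p)) (rroots p) ∧
    ∀ x : A → A → Prop,
      rroot p x = rcomp (rconv p) (rroot p x) ∧
      rroot p x = rcomp (rstar (rconv p)) (rroot p x) := by
  have hroots := hp.rcomp_rconv_eq_of_le_rroots (le_refl (rroots p))
  refine ⟨hroots.symm, (rcomp_rstar_eq_of_rcomp_le hroots.le).symm, fun x => ?_⟩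
  have hroot := hp.rcomp_rconv_eq_of_le_rroots (inf_le_right : rroot p x ≤ rroots p)
  exact ⟨hroot.symm, (rcomp_rstar_eq_of_rcomp_le hroot.le).symm⟩
end

section
/- Let p, w, y be binary relations on a type A. If p ⊓ 1ᶜ is acyclic, w and y are points, and y ⊆ (pᵀ)^*∘w (i.e., y is an ancestor of w in p), then the updated parent relation remains acyclic apart from self-loops: ((w ⊓ yᵀ) ⊔ (wᶜ ⊓ p)) ⊓ 1ᶜ is acyclic. -/
variable {A : Type*}

/-! Writing the points `w` and `y` as the rows of `a` and `b`, the write replaces the arcs leaving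
`a` by the single arc `(a, b)`. Off the diagonal the new relation is thus contained in the old one
plus that arc, and the hypothesis on `y` provides a `p`-path from `a` to `b`: a cycle through the
new arc would close up along this path into a cycle of `p ⊓ 1ᶜ`. -/

def rsingle (a b : A) : A → A → Prop := fun u v => u = a ∧ v = b

open Relation

theorem rAcyclic_iff {r : A → A → Prop} : RAcyclic r ↔ ∀ a, ¬TransGen r a a :=
  ⟨fun h a ha => h a a ha rfl, fun h a b hab (heq : a = b) => h a (heq ▸ hab)⟩

theorem RAcyclic.mono {r s : A → A → Prop} (hs : RAcyclic s) (hrs : r ≤ s) : RAcyclic r :=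
  fun a b hab => hs a b (TransGen.mono hrs a b hab)

theorem RPoint.exists_eq_const [Nonempty A] {w : A → A → Prop} (hw : RPoint w) :
    ∃ a, w = fun u _ => u = a := by
  obtain ⟨hvec, hinj, hsurj⟩ := hw
  obtain ⟨c⟩ := ‹Nonempty A›
  obtain ⟨a, hac, -⟩ := hsurj c c rfl
  have hrow : ∀ v, w a v := fun v => hvec ▸ ⟨c, hac, trivial⟩
  refine ⟨a, funext₂ fun u v => propext ⟨fun huv => ?_, (· ▸ hrow v)⟩⟩
  exact hinj u a ⟨v, huv, hrow v⟩

theorem rwrite_const_le (p : A → A → Prop) (a b : A) :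
    rwrite p (fun u _ => u = a) (fun u _ => u = b) ≤ p ⊔ rsingle a b := by
  rintro u v (⟨hu, hv⟩ | ⟨-, hp⟩)
  exacts [Or.inr ⟨hu, hv⟩, Or.inl hp]

theorem reflTransGen_inf_compl_rid {r : A → A → Prop} {a b : A} (h : ReflTransGen r a b) :
    ReflTransGen (r ⊓ ridᶜ) a b := by
  induction h with
  | refl => exact .refl
  | @tail c d _ hcd ih =>
    by_cases hc : c = d
    · exact hc ▸ ih
    · exact ih.tail ⟨hcd, hc⟩

theorem transGen_sup_rsingle {r : A → A → Prop} {a b u v : A}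
    (h : TransGen (r ⊔ rsingle a b) u v) :
    TransGen r u v ∨ ReflTransGen r u a ∧ ReflTransGen r b v := by
  induction h with
  | single h =>
    rcases h with h | ⟨rfl, rfl⟩
    exacts [.inl (.single h), .inr ⟨.refl, .refl⟩]
  | tail _ hcd ih =>
    rcases hcd with hcd | ⟨rfl, rfl⟩
    · rcases ih with ih | ⟨hua, hbc⟩
      exacts [.inl (ih.tail hcd), .inr ⟨hua, hbc.tail hcd⟩]
    · rcases ih with ih | ⟨hua, -⟩
      exacts [.inr ⟨ih.to_reflTransGen, .refl⟩, .inr ⟨hua, .refl⟩]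

theorem RAcyclic.sup_rsingle {r : A → A → Prop} {a b : A} (hr : RAcyclic r)
    (hab : TransGen r a b) : RAcyclic (r ⊔ rsingle a b) := by
  rw [rAcyclic_iff] at hr ⊢
  intro u hu
  rcases transGen_sup_rsingle hu with hu | ⟨hua, hbu⟩
  exacts [hr u hu, hr a (hab.trans_left (hbu.trans hua))]

theorem RAcyclic.sup_rsingle_inf_compl_rid {r : A → A → Prop} {a b : A}
    (hr : RAcyclic (r ⊓ ridᶜ)) (hab : ReflTransGen r a b) :
    RAcyclic ((r ⊔ rsingle a b) ⊓ ridᶜ) := by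
  rw [inf_sup_right]
  rcases reflTransGen_iff_eq_or_transGen.mp (reflTransGen_inf_compl_rid hab) with rfl | hab
  · exact hr.mono (sup_le le_rfl fun u v ⟨⟨hu, hv⟩, huv⟩ => absurd (hu.trans hv.symm) huv)
  · exact (hr.sup_rsingle hab).mono (sup_le_sup_left inf_le_left _)

theorem update_acyclic {A : Type*} (p w y : A → A → Prop)
    (hp : RAcyclic (p ⊓ ridᶜ)) (hw : RPoint w) (hy : RPoint y)
    (hyw : y ≤ rcomp (rstar (rconv p)) w) :
    RAcyclic (rwrite p w y ⊓ ridᶜ) := by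
  intro c d hcd
  have : Nonempty A := ⟨c⟩
  obtain ⟨a₀, rfl⟩ := hw.exists_eq_const
  obtain ⟨b, rfl⟩ := hy.exists_eq_const
  obtain ⟨a, hba, rfl⟩ := hyw b c rfl
  have hab : ReflTransGen p a b := reflTransGen_swap.mp hba
  exact (hp.sup_rsingle_inf_compl_rid hab).mono
    (inf_le_inf_right _ (rwrite_const_le p a b)) c d hcd
end

section
/- Let x be a binary relation on a type A such that x ⊓ 1ᶜ is acyclic. Then the self-loops of the transitive closure, of the square, and of x itself coincide: x^+ ⊓ 1 = (x∘x) ⊓ 1 = x ⊓ 1. -/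
variable {A : Type*}

/-! Deleting the self-loops from an `x`-path leaves an `(x ⊓ 1ᶜ)`-path, unless every step was a
self-loop at one point. Hence, when `x ⊓ 1ᶜ` is acyclic, every loop of `x^+` is a loop of `x`,
which closes the chain `x ⊓ 1 ≤ (x∘x) ⊓ 1 ≤ x^+ ⊓ 1`. -/

theorem rplus_le_rplus_inf_compl_rid_sup (x : A → A → Prop) :
    rplus x ≤ rplus (x ⊓ ridᶜ) ⊔ (x ⊓ rid) := by
  intro a b h
  induction h with
  | @single b hab =>
    by_cases hab' : a = b
    · exact Or.inr ⟨hab, hab'⟩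
    · exact Or.inl (.single ⟨hab, hab'⟩)
  | @tail b c _ hbc ih =>
    by_cases hbc' : b = c
    · exact hbc' ▸ ih
    · rcases ih with hab | ⟨-, rfl⟩
      · exact Or.inl (hab.tail ⟨hbc, hbc'⟩)
      · exact Or.inl (.single ⟨hbc, hbc'⟩)

theorem rplus_inf_rid_le_of_acyclic {x : A → A → Prop} (hx : RAcyclic (x ⊓ ridᶜ)) :
    rplus x ⊓ rid ≤ x ⊓ rid := by
  rintro a b ⟨hab, rfl⟩
  rcases rplus_le_rplus_inf_compl_rid_sup x a a hab with hloop | hxa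
  · exact absurd rfl (hx a a hloop)
  · exact hxa

theorem rcomp_self_le_rplus (x : A → A → Prop) : rcomp x x ≤ rplus x := by
  rintro a c ⟨b, hab, hbc⟩
  exact (Relation.TransGen.single hab).tail hbc

theorem inf_rid_le_rcomp_self (x : A → A → Prop) : x ⊓ rid ≤ rcomp x x := by
  rintro a b ⟨hab, rfl⟩
  exact ⟨a, hab, hab⟩

theorem acyclic_square {A : Type*} (x : A → A → Prop)
    (hx : RAcyclic (x ⊓ ridᶜ)) :
    rplus x ⊓ rid = rcomp x x ⊓ rid ∧ rcomp x x ⊓ rid = x ⊓ rid := by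
  have hloop_sq : x ⊓ rid ≤ rcomp x x ⊓ rid := le_inf (inf_rid_le_rcomp_self x) inf_le_right
  have hsq_plus : rcomp x x ⊓ rid ≤ rplus x ⊓ rid := inf_le_inf_right _ (rcomp_self_le_rplus x)
  have hplus_loop : rplus x ⊓ rid ≤ x ⊓ rid := rplus_inf_rid_le_of_acyclic hx
  exact ⟨le_antisymm (hplus_loop.trans hloop_sq) hsq_plus,
    le_antisymm (hsq_plus.trans hplus_loop) hloop_sq⟩
end

section
/- Let x and y be binary relations on a type A with x an arc (a single-edge relation). Then (x ⊔ y)^+ = y^+ ⊔ (y^*∘x∘y^*): in the transitive closure of the union it suffices to use the edge x at most once. -/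
variable {A : Type*}

/-! An arc `x` is a rectangle: any two of its edges `a → b`, `c → d` give the edge `a → d`,
because `a` and `c` both lie in the point `x∘⊤`. So the part of a path of `x ⊔ y` from its first
to its last `x`-edge can be replaced by a single `x`-edge, leaving only `y`-steps before and after
it. -/

section

open Relation

variable {x y : A → A → Prop}

theorem RInjective.rcomp_top_rcomp_le (hx : RInjective (rcomp x ⊤)) :
    rcomp (rcomp x ⊤) x ≤ x := by
  rintro a d ⟨c, ⟨b, hab, -⟩, hcd⟩
  have hac : a = c := hx a c ⟨d, ⟨b, hab, trivial⟩, ⟨d, hcd, trivial⟩⟩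
  exact hac ▸ hcd

theorem rplus_sup_le_of_rcomp_top_rcomp_le (hx : rcomp (rcomp x ⊤) x ≤ x) :
    rplus (x ⊔ y) ≤ rplus y ⊔ rcomp (rcomp (rstar y) x) (rstar y) := by
  intro u v huv
  induction huv with
  | single hstep =>
    rcases hstep with hx' | hy
    · exact Or.inr ⟨_, ⟨u, .refl, hx'⟩, .refl⟩
    · exact Or.inl (.single hy)
  | tail _ hstep ih =>
    rcases hstep, ih with ⟨hx' | hy, hplus | ⟨q, ⟨p, hup, hpq⟩, hqc⟩⟩
    · exact Or.inr ⟨_, ⟨_, hplus.to_reflTransGen, hx'⟩, .refl⟩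
    · exact Or.inr ⟨_, ⟨p, hup, hx _ _ ⟨_, ⟨q, hpq, trivial⟩, hx'⟩⟩, .refl⟩
    · exact Or.inl (hplus.tail hy)
    · exact Or.inr ⟨q, ⟨p, hup, hpq⟩, hqc.tail hy⟩

theorem rcomp_rstar_rcomp_rstar_le_rplus_sup :
    rcomp (rcomp (rstar y) x) (rstar y) ≤ rplus (x ⊔ y) := by
  rintro u v ⟨q, ⟨p, hup, hpq⟩, hqv⟩
  have hy : ∀ a b, y a b → (x ⊔ y) a b := fun _ _ => Or.inr
  exact TransGen.trans_right (hup.mono hy _ _) (TransGen.head' (Or.inl hpq) (hqv.mono hy _ _))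

end

theorem plus_arc_decompose {A : Type*} (x y : A → A → Prop) (hx : RArc x) :
    rplus (x ⊔ y) = rplus y ⊔ rcomp (rcomp (rstar y) x) (rstar y) :=
  le_antisymm (rplus_sup_le_of_rcomp_top_rcomp_le (RInjective.rcomp_top_rcomp_le hx.1.2.1))
    (sup_le (Relation.TransGen.mono fun _ _ => Or.inr) rcomp_rstar_rcomp_rstar_le_rplus_sup)
end
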